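/- For every integer n ≥ 0, the probability that the maximum of the random walk stays at most 1 satisfies U_{2n}(p) = U_{2n+1}(p) = 1 − Σ_{j=1}^{n} t_{j+1} p^{j+1} q^{j-1}, where t_m := (1/m)·C(2m−2, m−1). -/

import Mathlib

open Finset

/-- Probability weight of a single path of length `N`. -/
noncomputable def pathProb (p : ℝ) (N : ℕ) (x : Fin N → Bool) : ℝ :=
  p ^ (Finset.univ.filter (fun i => x i = true)).card *
    (1 - p) ^ (N - (Finset.univ.filter (fun i => x i = true)).card)

open Classical in
/-- Probability of an event `E` for the `N`-step Bernoulli walk. -/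
noncomputable def walkProb (p : ℝ) (N : ℕ) (E : Set (Fin N → Bool)) : ℝ :=
  ∑ x : Fin N → Bool, if x ∈ E then pathProb p N x else 0

/-- Partial sum `S_j` of the walk given by the path `x`. -/
def walkS (N : ℕ) (x : Fin N → Bool) (j : ℕ) : ℤ :=
  ∑ i ∈ Finset.univ.filter (fun i : Fin N => (i : ℕ) < j), (if x i then (1 : ℤ) else -1)

/-- Running maximum `M_N = max_{0 ≤ j ≤ N} S_j`. -/
def walkM (N : ℕ) (x : Fin N → Bool) : ℤ :=
  (Finset.range (N + 1)).sup' Finset.nonempty_range_add_one (fun j => walkS N x j)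

/-- `U_n(p) = P(M_n ≤ 1)`. -/
noncomputable def U (n : ℕ) (p : ℝ) : ℝ :=
  walkProb p n {x | walkM n x ≤ 1}

/-!
Appending a step to a path, the event `M ≤ 1` loses exactly the paths that first reach `2` at the
new step, so `U (N + 1) = U N - P(first passage to 2 at time N + 1)`. A first passage at time `N`
forces `N` to be even, say `N = 2m + 2`, and then the path has `m + 2` up-steps and `m` down-steps.
Dropping its final up-step, reading up-steps as `D` and down-steps as `U`, and prepending a `U` is
a bijection onto the Dyck words of semilength `m + 1`, so there are
`catalan (m + 1) = C(2m + 2, m + 1) / (m + 2)` such paths.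
-/

def pathHeight (l : List Bool) : ℤ := (l.count true : ℤ) - l.count false

lemma pathHeight_append_singleton (l : List Bool) (b : Bool) :
    pathHeight (l ++ [b]) = pathHeight l + if b then 1 else -1 := by
  cases b <;> simp [pathHeight, List.count_append] <;> ring

section Walk

variable {N : ℕ}

lemma walkS_succ (x : Fin N → Bool) (j : ℕ) :
    walkS N x (j + 1) =
      walkS N x j + if h : j < N then (if x ⟨j, h⟩ then 1 else -1) else 0 := by
  unfold walkS
  by_cases h : j < N
  · rw [dif_pos h]
    have : univ.filter (fun i : Fin N => (i : ℕ) < j + 1) =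
        insert ⟨j, h⟩ (univ.filter fun i : Fin N => (i : ℕ) < j) := by
      ext i
      simp only [mem_filter, mem_univ, true_and, mem_insert, Fin.ext_iff]
      omega
    rw [this, sum_insert (by simp)]
    ring
  · rw [dif_neg h]
    have : univ.filter (fun i : Fin N => (i : ℕ) < j + 1) =
        univ.filter fun i : Fin N => (i : ℕ) < j := by
      ext i
      simp only [mem_filter, mem_univ, true_and]
      omega
    rw [this, add_zero]

lemma walkS_succ_le (x : Fin N → Bool) (j : ℕ) : walkS N x (j + 1) ≤ walkS N x j + 1 := by
  rw [walkS_succ]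
  split_ifs <;> omega

lemma walkS_eq_pathHeight_take (x : Fin N → Bool) (j : ℕ) :
    walkS N x j = pathHeight ((List.ofFn x).take j) := by
  induction j with
  | zero => simp [walkS, pathHeight]
  | succ j ih =>
    rw [walkS_succ, ih]
    by_cases h : j < N
    · rw [dif_pos h, List.take_add_one, List.getElem?_ofFn, dif_pos h,
        Option.toList_some, pathHeight_append_singleton]
    · rw [dif_neg h, List.take_of_length_le (by simp; omega),
        List.take_of_length_le (by simp; omega), add_zero]

lemma walkS_self (x : Fin N → Bool) :
    walkS N x N = 2 * ((univ.filter fun i => x i = true).card : ℤ) - N := by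
  have hall : univ.filter (fun i : Fin N => (i : ℕ) < N) = univ := by
    ext i
    simp
  have hcard := card_filter_add_card_filter_not (s := univ) (fun i : Fin N => x i = true)
  rw [walkS, hall, sum_ite, sum_const, sum_const]
  simp only [Bool.not_eq_true, card_univ, Fintype.card_fin, nsmul_eq_mul, mul_one,
    mul_neg_one] at hcard ⊢
  omega

lemma walkS_init (x : Fin (N + 1) → Bool) {j : ℕ} (hj : j ≤ N) :
    walkS N (Fin.init x) j = walkS (N + 1) x j := by
  rw [walkS_eq_pathHeight_take, walkS_eq_pathHeight_take, List.ofFn_succ', List.concat_eq_append,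
    List.take_append_of_le_length (by simpa using hj)]
  rfl

lemma walkM_le_iff (x : Fin N → Bool) (c : ℤ) :
    walkM N x ≤ c ↔ ∀ j ≤ N, walkS N x j ≤ c := by
  simp only [walkM, sup'_le_iff, mem_range, Nat.lt_succ_iff]

end Walk

section Probability

variable {N : ℕ} (p : ℝ)

lemma pathProb_eq_prod (x : Fin N → Bool) :
    pathProb p N x = ∏ i, if x i then p else 1 - p := by
  have hcard := card_filter_add_card_filter_not (s := univ) (fun i : Fin N => x i = true)
  rw [card_univ, Fintype.card_fin] at hcard
  rw [pathProb, prod_ite, prod_const, prod_const]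
  congr 2
  omega

lemma pathProb_snoc (x : Fin N → Bool) (b : Bool) :
    pathProb p (N + 1) (Fin.snoc x b) = pathProb p N x * if b then p else 1 - p := by
  simp only [pathProb_eq_prod, Fin.prod_univ_castSucc, Fin.snoc_castSucc, Fin.snoc_last]

lemma walkProb_preimage_init (E : Set (Fin N → Bool)) :
    walkProb p (N + 1) (Fin.init ⁻¹' E) = walkProb p N E := by
  classical
  rw [walkProb, ← (Fin.snocEquiv fun _ => Bool).sum_comp, Fintype.sum_prod_type,
    Fintype.sum_bool, walkProb, ← sum_add_distrib]
  refine sum_congr rfl fun w _ => ?_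
  have hsnoc (b : Bool) : Fin.snocEquiv (fun _ => Bool) (b, w) = Fin.snoc w b := rfl
  simp only [hsnoc, Set.mem_preimage, Fin.init_snoc, pathProb_snoc, if_true, Bool.false_eq_true,
    if_false]
  split_ifs <;> ring

lemma walkProb_diff {E F : Set (Fin N → Bool)} (hFE : F ⊆ E) :
    walkProb p N (E \ F) = walkProb p N E - walkProb p N F := by
  rw [walkProb, walkProb, walkProb, ← sum_sub_distrib]
  refine sum_congr rfl fun x _ => ?_
  by_cases hF : x ∈ F
  · simp [hF, hFE hF]
  · by_cases hE : x ∈ E <;> simp [hF, hE]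

lemma walkProb_eq_natCard_mul {E : Set (Fin N → Bool)} {c : ℝ}
    (hc : ∀ x ∈ E, pathProb p N x = c) : walkProb p N E = Nat.card E * c := by
  classical
  rw [walkProb, ← sum_filter, sum_congr rfl fun x hx => hc x (mem_filter.1 hx).2, sum_const,
    nsmul_eq_mul, Nat.card_eq_card_toFinset, Set.filter_mem_univ_eq_toFinset]

end Probability

def firstPassage (N : ℕ) : Set (Fin N → Bool) :=
  {x | (∀ k < N, walkS N x k ≤ 1) ∧ walkS N x N = 2}

def belowTwoEndingAtOne (N : ℕ) : Set (Fin N → Bool) :=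
  {w | (∀ k ≤ N, walkS N w k ≤ 1) ∧ walkS N w N = 1}

section FirstPassage

variable {N : ℕ}

lemma setOf_walkM_succ_le_one :
    {x : Fin (N + 1) → Bool | walkM (N + 1) x ≤ 1} =
      Fin.init ⁻¹' {w : Fin N → Bool | walkM N w ≤ 1} \ firstPassage (N + 1) := by
  ext x
  have hstep := walkS_succ_le x N
  simp only [firstPassage, Set.mem_sdiff, Set.mem_preimage, Set.mem_ofPred_eq,
    walkM_le_iff]
  constructor
  · intro h
    refine ⟨fun j hj => (walkS_init x hj).trans_le (h j (by omega)), fun hfirst => ?_⟩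
    have := h (N + 1) le_rfl
    omega
  · rintro ⟨hinit, hnot⟩
    have hle : ∀ j ≤ N, walkS (N + 1) x j ≤ 1 := fun j hj => walkS_init x hj ▸ hinit j hj
    intro j hj
    rcases Nat.lt_or_eq_of_le hj with hj | rfl
    · exact hle j (by omega)
    · have := hle N le_rfl
      have : walkS (N + 1) x (N + 1) ≠ 2 := fun h2 => hnot ⟨fun k hk => hle k (by omega), h2⟩
      omega

lemma firstPassage_succ_subset :
    firstPassage (N + 1) ⊆ Fin.init ⁻¹' {w : Fin N → Bool | walkM N w ≤ 1} := fun x hx =>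
  (walkM_le_iff _ 1).2 fun j hj => walkS_init x hj ▸ hx.1 j (Nat.lt_succ_of_le hj)

lemma U_succ (p : ℝ) (N : ℕ) :
    U (N + 1) p = U N p - walkProb p (N + 1) (firstPassage (N + 1)) := by
  rw [U, setOf_walkM_succ_le_one, walkProb_diff _ firstPassage_succ_subset,
    walkProb_preimage_init, U]

lemma firstPassage_two_mul_add_one (n : ℕ) : firstPassage (2 * n + 1) = ∅ := by
  refine Set.eq_empty_of_forall_notMem fun x hx => ?_
  have := walkS_self x
  have := hx.2
  omega

lemma pathProb_of_mem_firstPassage (p : ℝ) {j : ℕ} {x : Fin (2 * j + 2) → Bool}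
    (hx : x ∈ firstPassage (2 * j + 2)) : pathProb p _ x = p ^ (j + 2) * (1 - p) ^ j := by
  have hups : (univ.filter fun i => x i = true).card = j + 2 := by
    have := walkS_self x
    have := hx.2
    omega
  rw [pathProb, hups, show 2 * j + 2 - (j + 2) = j by omega]

lemma mem_firstPassage_succ_iff (x : Fin (N + 1) → Bool) :
    x ∈ firstPassage (N + 1) ↔
      x (Fin.last N) = true ∧ Fin.init x ∈ belowTwoEndingAtOne N := by
  have hlast : walkS (N + 1) x (N + 1) =
      walkS N (Fin.init x) N + if x (Fin.last N) then 1 else -1 := by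
    rw [walkS_succ, dif_pos N.lt_succ_self, walkS_init x le_rfl]
    rfl
  simp only [firstPassage, belowTwoEndingAtOne, Set.mem_ofPred_eq, Nat.lt_succ_iff, hlast]
  constructor
  · rintro ⟨hle, h2⟩
    have hN := walkS_init x le_rfl ▸ hle N le_rfl
    have hup : x (Fin.last N) = true := by
      by_contra hdown
      simp only [hdown, if_false] at h2
      omega
    simp only [hup, if_true] at h2
    exact ⟨hup, fun k hk => walkS_init x hk ▸ hle k hk, by omega⟩
  · rintro ⟨hup, hle, h1⟩
    simp only [hup, if_true, h1]
    exact ⟨fun k hk => walkS_init x hk ▸ hle k hk, by norm_num⟩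

lemma natCard_firstPassage_succ :
    Nat.card (firstPassage (N + 1)) = Nat.card (belowTwoEndingAtOne N) :=
  Nat.card_congr
    { toFun x := ⟨Fin.init x.1, ((mem_firstPassage_succ_iff x.1).1 x.2).2⟩
      invFun w := ⟨Fin.snoc w.1 true, (mem_firstPassage_succ_iff _).2 (by simp [w.2])⟩
      left_inv x := by
        ext1
        conv_rhs => rw [← Fin.snoc_init_self x.1, ((mem_firstPassage_succ_iff x.1).1 x.2).1]
      right_inv w := Subtype.ext (Fin.init_snoc (α := fun _ => Bool) _ _) }

end FirstPassage

def boolEquivDyckStep : Bool ≃ DyckStep where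
  toFun b := if b then .D else .U
  invFun s := s = .D
  left_inv b := by cases b <;> rfl
  right_inv s := by cases s <;> rfl

def pathToDyckList (l : List Bool) : List DyckStep := .U :: l.map boolEquivDyckStep

lemma count_D_map_boolEquivDyckStep (l : List Bool) :
    (l.map boolEquivDyckStep).count .D = l.count true :=
  List.count_map_of_injective l _ boolEquivDyckStep.injective true

lemma count_U_map_boolEquivDyckStep (l : List Bool) :
    (l.map boolEquivDyckStep).count .U = l.count false :=
  List.count_map_of_injective l _ boolEquivDyckStep.injective false

lemma count_U_pathToDyckList_eq_count_D_iff (l : List Bool) :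
    (pathToDyckList l).count .U = (pathToDyckList l).count .D ↔ pathHeight l = 1 := by
  rw [pathToDyckList, List.count_cons_self, List.count_cons_of_ne (by decide),
    count_U_map_boolEquivDyckStep, count_D_map_boolEquivDyckStep, pathHeight]
  omega

lemma count_D_take_pathToDyckList_le_iff (l : List Bool) :
    (∀ i, ((pathToDyckList l).take i).count .D ≤ ((pathToDyckList l).take i).count .U) ↔
      ∀ k, pathHeight (l.take k) ≤ 1 := by
  have hstep (k : ℕ) : ((pathToDyckList l).take (k + 1)).count .D ≤
      ((pathToDyckList l).take (k + 1)).count .U ↔ pathHeight (l.take k) ≤ 1 := by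
    rw [pathToDyckList, List.take_succ_cons, ← List.map_take, List.count_cons_self,
      List.count_cons_of_ne (by decide), count_U_map_boolEquivDyckStep,
      count_D_map_boolEquivDyckStep, pathHeight]
    omega
  refine ⟨fun h k => (hstep k).1 (h (k + 1)), fun h i => ?_⟩
  cases i with
  | zero => simp
  | succ k => exact (hstep k).2 (h k)

lemma mem_belowTwoEndingAtOne_iff {N : ℕ} (w : Fin N → Bool) :
    w ∈ belowTwoEndingAtOne N ↔
      (∀ k, pathHeight ((List.ofFn w).take k) ≤ 1) ∧ pathHeight (List.ofFn w) = 1 := by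
  have hfull : (List.ofFn w).take N = List.ofFn w := List.take_of_length_le (by simp)
  simp only [belowTwoEndingAtOne, Set.mem_ofPred_eq, walkS_eq_pathHeight_take, hfull]
  refine and_congr_left fun h1 => ⟨fun h k => ?_, fun h k _ => h k⟩
  rcases le_or_gt k N with hk | hk
  · exact h k hk
  · rw [List.take_of_length_le (by simp; omega), h1]

def dyckWordOfMem {N : ℕ} {w : Fin N → Bool} (hw : w ∈ belowTwoEndingAtOne N) : DyckWord where
  toList := pathToDyckList (List.ofFn w)
  count_U_eq_count_D :=
    (count_U_pathToDyckList_eq_count_D_iff _).2 ((mem_belowTwoEndingAtOne_iff w).1 hw).2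
  count_D_le_count_U :=
    (count_D_take_pathToDyckList_le_iff _).2 ((mem_belowTwoEndingAtOne_iff w).1 hw).1

lemma semilength_dyckWordOfMem {j : ℕ} {w : Fin (2 * j + 1) → Bool}
    (hw : w ∈ belowTwoEndingAtOne (2 * j + 1)) : (dyckWordOfMem hw).semilength = j + 1 := by
  have hheight := ((mem_belowTwoEndingAtOne_iff w).1 hw).2
  have hlen := List.count_true_add_count_false (List.ofFn w)
  rw [List.length_ofFn] at hlen
  rw [pathHeight] at hheight
  simp only [DyckWord.semilength, dyckWordOfMem, pathToDyckList, List.count_cons_self,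
    count_U_map_boolEquivDyckStep]
  omega

lemma natCard_belowTwoEndingAtOne (j : ℕ) :
    Nat.card (belowTwoEndingAtOne (2 * j + 1)) = catalan (j + 1) := by
  rw [← DyckWord.card_dyckWord_semilength_eq_catalan, ← Nat.card_eq_fintype_card]
  refine Nat.card_eq_of_bijective (fun w => ⟨dyckWordOfMem w.2, semilength_dyckWordOfMem w.2⟩)
    ⟨fun w₁ w₂ h => ?_, fun d => ?_⟩
  · have h := congrArg (fun d : {d : DyckWord // _} => d.1.toList) h
    simp only [dyckWordOfMem, pathToDyckList, List.cons.injEq, true_and,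
      List.map_inj_right boolEquivDyckStep.injective, List.ofFn_inj] at h
    exact Subtype.ext h
  · obtain ⟨⟨_ | ⟨s, t⟩, hUD, hprefix⟩, hd⟩ := d
    · simp [DyckWord.semilength] at hd
    obtain rfl : s = DyckStep.U :=
      DyckWord.head_eq_U ⟨s :: t, hUD, hprefix⟩ (List.cons_ne_nil _ _)
    set l := t.map boolEquivDyckStep.symm
    have ht : l.map boolEquivDyckStep = t := by simp [l]
    have hlen : l.length = 2 * j + 1 := by
      have := DyckWord.two_mul_semilength_eq_length (p := ⟨_, hUD, hprefix⟩)
      simp only [hd, List.length_cons] at this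
      simp only [l, List.length_map]
      omega
    obtain ⟨w, hw⟩ : ∃ w : Fin (2 * j + 1) → Bool, List.ofFn w = l :=
      ⟨fun i => l[i.1], List.ext_getElem (by simp [hlen]) fun i _ _ => List.getElem_ofFn ..⟩
    rw [← ht, ← hw] at hUD hprefix
    refine ⟨⟨w, (mem_belowTwoEndingAtOne_iff w).2
      ⟨(count_D_take_pathToDyckList_le_iff _).1 hprefix,
        (count_U_pathToDyckList_eq_count_D_iff _).1 hUD⟩⟩, Subtype.ext (DyckWord.ext ?_)⟩
    simp only [dyckWordOfMem, pathToDyckList, hw, ht]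

lemma U_zero (p : ℝ) : U 0 p = 1 := by
  simp [U, walkProb, walkM, walkS, pathProb]

lemma U_two_mul_add_one (p : ℝ) (n : ℕ) : U (2 * n + 1) p = U (2 * n) p := by
  rw [U_succ, firstPassage_two_mul_add_one]
  simp [walkProb]

lemma U_two_mul_succ (p : ℝ) (n : ℕ) :
    U (2 * n + 2) p = U (2 * n + 1) p - catalan (n + 1) * p ^ (n + 2) * (1 - p) ^ n := by
  rw [U_succ p (2 * n + 1), walkProb_eq_natCard_mul p fun _ => pathProb_of_mem_firstPassage p,
    natCard_firstPassage_succ, natCard_belowTwoEndingAtOne, mul_assoc]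

lemma catalan_eq_choose_div (n : ℕ) : (catalan n : ℝ) = (2 * n).choose n / (n + 1) := by
  rw [eq_div_iff (by positivity), ← Nat.centralBinom_eq_two_mul_choose,
    ← succ_mul_catalan_eq_centralBinom]
  push_cast
  ring

theorem U_formula_general (p : ℝ) (n : ℕ) :
    U (2 * n) p = 1 - ∑ j ∈ Finset.Icc 1 n,
        (((2 * j).choose j : ℝ) / (j + 1)) * p ^ (j + 1) * (1 - p) ^ (j - 1) ∧
    U (2 * n + 1) p = 1 - ∑ j ∈ Finset.Icc 1 n,
        (((2 * j).choose j : ℝ) / (j + 1)) * p ^ (j + 1) * (1 - p) ^ (j - 1) := by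
  have heven : U (2 * n) p = 1 - ∑ j ∈ Finset.Icc 1 n,
      (((2 * j).choose j : ℝ) / (j + 1)) * p ^ (j + 1) * (1 - p) ^ (j - 1) := by
    induction n with
    | zero => simp [U_zero]
    | succ n ih =>
      rw [mul_add_one, U_two_mul_succ, U_two_mul_add_one, ih, sum_Icc_succ_top (by omega),
        catalan_eq_choose_div]
      push_cast
      ring
  exact ⟨heven, (U_two_mul_add_one p n).trans heven⟩

/-- `U_{2n}(p) = U_{2n+1}(p) = 1 − Σ_{j=1}^{n} t_{j+1} p^{j+1} q^{j-1}`,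
where `t_{j+1} = C(2j, j)/(j+1)`. -/
theorem U_formula (p : ℝ) (hp : p ∈ Set.Ioo (0 : ℝ) 1) (n : ℕ) :
    U (2 * n) p = 1 - ∑ j ∈ Finset.Icc 1 n,
        (((2 * j).choose j : ℝ) / (j + 1)) * p ^ (j + 1) * (1 - p) ^ (j - 1) ∧
    U (2 * n + 1) p = 1 - ∑ j ∈ Finset.Icc 1 n,
        (((2 * j).choose j : ℝ) / (j + 1)) * p ^ (j + 1) * (1 - p) ^ (j - 1) :=
  U_formula_general p n
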